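/- Let G be connected and let s be the cardinality of a minimum balanced separator of G. Then for every contraction order π: (i) there exists a vertex whose search space SS(v) in G^∧π contains at least s vertices and at least s(s−1)/2 arcs; (ii) the average over all n vertices v of the number of vertices in SS(v) is at least s/3, and the average number of arcs in SS(v) is at least s(s−1)/6. -/

import Mathlib

open SimpleGraph
open scoped ENNReal

variable {V : Type*}

/-- One step of vertex contraction: remove `v` from the current graph and add an edge
between every pair of its current neighbors. -/
def chStep (H : SimpleGraph V) (v : V) : SimpleGraph V where
  Adj a b := a ≠ b ∧ a ≠ v ∧ b ≠ v ∧ (H.Adj a b ∨ (H.Adj v a ∧ H.Adj v b))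
  symm := ⟨by
    rintro a b ⟨h1, h2, h3, h4⟩
    refine ⟨h1.symm, h3, h2, ?_⟩
    rcases h4 with h | ⟨ha, hb⟩
    · exact Or.inl h.symm
    · exact Or.inr ⟨hb, ha⟩⟩
  loopless := ⟨fun a h => h.1 rfl⟩

/-- All edges ever present while contracting the vertices of the list in order:
the edges of the initial graph together with all added shortcuts. -/
def chList : SimpleGraph V → List V → SimpleGraph V
  | H, [] => H
  | H, v :: l => H ⊔ chList (chStep H v) l

/-- The rank of a vertex with respect to the contraction order `π`. -/
def rk {n : ℕ} (π : Fin n ≃ V) (v : V) : ℕ := (π.symm v : ℕ)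

/-- The contraction hierarchy `G*π`: contract `π 0, π 1, …` in this order and collect
all original edges and all added shortcuts. -/
def chGraph {n : ℕ} (G : SimpleGraph V) (π : Fin n ≃ V) : SimpleGraph V :=
  chList G ((List.finRange n).map ⇑π)

/-- A list of vertices is up-down w.r.t. a rank function: ranks strictly increase
along a prefix and strictly decrease along the remaining suffix, the two parts
meeting at the maximum-rank vertex. -/
def IsUpDown (r : V → ℕ) (l : List V) : Prop :=
  ∃ l₁ x l₂, l = l₁ ++ x :: l₂ ∧
    List.Chain' (fun a b => r a < r b) (l₁ ++ [x]) ∧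
    List.Chain' (fun a b => r b < r a) (x :: l₂)

/-- Reachability in the upward directed graph `G^∧π` (edges of `G*π` directed from
lower to higher rank): the vertex set of the search space `SS v`. -/
def UpReach {n : ℕ} (G : SimpleGraph V) (π : Fin n ≃ V) (v u : V) : Prop :=
  Relation.ReflTransGen (fun a b => (chGraph G π).Adj a b ∧ rk π a < rk π b) v u

/-- Length of a walk: the sum of the weights of its edges. -/
noncomputable def wlen {H : SimpleGraph V} (m : V → V → ℝ≥0∞) {s t : V}
    (p : H.Walk s t) : ℝ≥0∞ :=
  (p.darts.map (fun d => m d.toProd.1 d.toProd.2)).sum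

/-- Shortest path distance in a graph `H` under edge weights `m`. -/
noncomputable def gdist (H : SimpleGraph V) (m : V → V → ℝ≥0∞) (s t : V) : ℝ≥0∞ :=
  ⨅ (p : H.Walk s t), wlen m p

/-- Minimum length of an up-down `s`-`t` path in `G*π`. -/
noncomputable def updist {n : ℕ} (G : SimpleGraph V) (π : Fin n ≃ V)
    (m : V → V → ℝ≥0∞) (s t : V) : ℝ≥0∞ :=
  ⨅ (p : (chGraph G π).Walk s t) (_ : IsUpDown (rk π) p.support), wlen m p

/-- Minimum length of a strictly rank-increasing `u`-`v` path in `G*π`. -/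
noncomputable def upOnlyDist {n : ℕ} (G : SimpleGraph V) (π : Fin n ≃ V)
    (m : V → V → ℝ≥0∞) (u v : V) : ℝ≥0∞ :=
  ⨅ (p : (chGraph G π).Walk u v)
    (_ : List.Chain' (fun a b => rk π a < rk π b) p.support), wlen m p

/-- `S` is a balanced separator of the subgraph of `G` induced by `U`. -/
def IsBalancedSepOn [DecidableEq V] (G : SimpleGraph V) (U S : Finset V) : Prop :=
  S ⊆ U ∧ ∃ A B : Finset V, A ⊆ U ∧ B ⊆ U ∧
    Disjoint A B ∧ Disjoint A S ∧ Disjoint B S ∧ A ∪ B ∪ S = U ∧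
    (∀ a ∈ A, ∀ b ∈ B, ¬ G.Adj a b) ∧
    3 * A.card ≤ 2 * U.card ∧ 3 * B.card ≤ 2 * U.card

/-- Nested dissection orders (as lists, earliest contracted first, separator last)
of induced subgraphs of `G`, in which the separator chosen at every recursion step on
a `k`-vertex subgraph is balanced and has cardinality at most `c * k ^ α`. -/
inductive IsNDOrder [DecidableEq V] (G : SimpleGraph V) (c α : ℝ) : Finset V → List V → Prop
  | empty : IsNDOrder G c α ∅ []
  | step {U S A B : Finset V} {lA lB lS : List V} :
      Disjoint A B → Disjoint A S → Disjoint B S → A ∪ B ∪ S = U →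
      (∀ a ∈ A, ∀ b ∈ B, ¬ G.Adj a b) →
      3 * A.card ≤ 2 * U.card → 3 * B.card ≤ 2 * U.card →
      ((S.card : ℝ) ≤ c * (U.card : ℝ) ^ α) →
      lS.Nodup → lS.toFinset = S →
      IsNDOrder G c α A lA → IsNDOrder G c α B lB →
      IsNDOrder G c α U (lA ++ lB ++ lS)

/-- Number of vertices of the search space `SS v` in `G^∧π`. -/
noncomputable def nVertsSS {n : ℕ} (G : SimpleGraph V) (π : Fin n ≃ V) (v : V) : ℕ :=
  {u | UpReach G π v u}.ncard

/-- Number of arcs of the search space `SS v` in `G^∧π`: arcs of `G^∧π` with both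
endpoints reachable from `v`. -/
noncomputable def nArcsSS {n : ℕ} (G : SimpleGraph V) (π : Fin n ≃ V) (v : V) : ℕ :=
  {q : V × V | (chGraph G π).Adj q.1 q.2 ∧ rk π q.1 < rk π q.2 ∧
    UpReach G π v q.1 ∧ UpReach G π v q.2}.ncard

/-- The rank sequence of a walk: for each edge, the minimum of the ranks of its
endpoints, sorted in decreasing order. -/
def rankSeq {H : SimpleGraph V} (r : V → ℕ) {s t : V} (p : H.Walk s t) : List ℕ :=
  (p.darts.map (fun d => min (r d.toProd.1) (r d.toProd.2))).insertionSort (· ≥ ·)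

/-- Directed length of a walk in `G*π` under a pair of directed metrics `(mu, md)`:
each edge traversed from lower rank to higher rank costs its upward weight,
each edge traversed from higher rank to lower rank costs its downward weight. -/
noncomputable def dlen {H : SimpleGraph V} (r : V → ℕ) (mu md : V → V → ℝ≥0∞)
    {s t : V} (p : H.Walk s t) : ℝ≥0∞ :=
  (p.darts.map (fun d =>
    if r d.toProd.1 < r d.toProd.2 then mu d.toProd.1 d.toProd.2
    else md d.toProd.2 d.toProd.1)).sum

/-- Length of a directed walk `s :: l` under arc weights `wD`. -/
noncomputable def dWalkLen (wD : V → V → ℝ≥0∞) : V → List V → ℝ≥0∞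
  | _, [] => 0
  | s, x :: l => wD s x + dWalkLen wD x l

/-- Shortest directed path distance in the directed graph `D` under arc weights `wD`. -/
noncomputable def ddist (D : V → V → Prop) (wD : V → V → ℝ≥0∞) (s t : V) : ℝ≥0∞ :=
  ⨅ (l : List V) (_ : List.Chain D s l ∧ l.getLastD s = t), dWalkLen wD s l


/-!
Let `k` be the least rank such that the vertices of rank `< k` induce a component `C` of `G`
with more than `2n/3` vertices, and let `v` be the vertex of highest rank in `C`. A walk of `G`
whose inner vertices all rank below both of its ends becomes an edge of `G*π`, since contracting
its inner vertices one by one shortcuts it. Hence every vertex of `C` reaches `v` in `G^∧π`, and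
`S' = {v} ∪ N(C)` is a clique of `G*π` above `v`, so `S' ⊆ SS(w)` for every `w ∈ C`. Deleting
`S'` leaves components inside `C - v`, which have at most `2n/3` vertices by the minimality of
`k`, and fewer than `n/3` further vertices; grouping them gives two sides of at most `2n/3`
vertices each. So `S'` is a balanced separator, `s ≤ |S'|`, and summing over the more than
`2n/3` vertices of `C` gives the averages.
-/

section Rank

variable {n : ℕ} (π : Fin n ≃ V)

lemma rk_lt (v : V) : rk π v < n := (π.symm v).isLt

lemma rk_injective : Function.Injective (rk π) :=
  Fin.val_injective.comp π.symm.injective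

lemma rk_apply (i : Fin n) : rk π (π i) = i := by simp [rk]

end Rank

section ContractionHierarchy

variable {n : ℕ} (G : SimpleGraph V) (π : Fin n ≃ V)

@[simp]
lemma chStep_adj {H : SimpleGraph V} {v a b : V} :
    (chStep H v).Adj a b ↔
      a ≠ b ∧ a ≠ v ∧ b ≠ v ∧ (H.Adj a b ∨ (H.Adj v a ∧ H.Adj v b)) :=
  Iff.rfl

def chAfter (k : ℕ) : SimpleGraph V :=
  (((List.finRange n).map π).take k).foldl chStep G

lemma foldl_chStep_le_chList {t l : List V} (h : t <+: l) (H : SimpleGraph V) :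
    t.foldl chStep H ≤ chList H l := by
  induction l generalizing t H with
  | nil => rw [List.prefix_nil.1 h]; exact le_rfl
  | cons v l ih =>
    cases t with
    | nil => exact le_sup_left
    | cons w t =>
      obtain ⟨rfl, ht⟩ := List.cons_prefix_cons.1 h
      exact (ih ht (chStep H _)).trans le_sup_right

lemma chAfter_le_chGraph (k : ℕ) : chAfter G π k ≤ chGraph G π :=
  foldl_chStep_le_chList (List.take_prefix _ _) G

lemma chAfter_succ {k : ℕ} {v : V} (hv : rk π v = k) :
    chAfter G π (k + 1) = chStep (chAfter G π k) v := by
  subst hv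
  have hv : ((List.finRange n).map π)[rk π v]? = some v := by simp [rk]
  rw [chAfter, chAfter, List.take_add_one, List.foldl_append, hv]
  rfl

lemma chAfter_adj_of_isPath (k : ℕ) :
    ∀ {u w : V} (p : G.Walk u w), p.IsPath → u ≠ w → k ≤ rk π u → k ≤ rk π w →
      (∀ y ∈ p.support, y = u ∨ y = w ∨ rk π y < k) → (chAfter G π k).Adj u w := by
  classical
  induction k with
  | zero =>
    rintro u w (_ | ⟨hadj, q⟩) hp huw - - hsupp
    · exact absurd rfl huw
    · rcases hsupp _ (List.mem_cons_of_mem _ q.start_mem_support) with h | rfl | h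
      · exact absurd (h ▸ q.start_mem_support) (Walk.cons_isPath_iff _ _ |>.1 hp).2
      · exact hadj
      · omega
  | succ k ih =>
    intro u w p hp huw hu hw hsupp
    set x := π ⟨k, by have := rk_lt π u; omega⟩
    have hx : rk π x = k := rk_apply π _
    have hxu : x ≠ u := fun h => by rw [h] at hx; omega
    have hxw : x ≠ w := fun h => by rw [h] at hx; omega
    have hlow : ∀ y ∈ p.support, y = u ∨ y = w ∨ y = x ∨ rk π y < k := by
      intro y hy
      have : rk π y = k → y = x := fun h => rk_injective π (h.trans hx.symm)
      rcases hsupp y hy with h | h | h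
      · exact Or.inl h
      · exact Or.inr (Or.inl h)
      · by_cases hyk : rk π y = k
        exacts [Or.inr (Or.inr (Or.inl (this hyk))), Or.inr (Or.inr (Or.inr (by omega)))]
    rw [chAfter_succ G π hx, chStep_adj]
    refine ⟨huw, hxu.symm, hxw.symm, ?_⟩
    -- Contracting `x` joins the ends of the two halves of the path at `x`.
    by_cases hxp : x ∈ p.support
    · right
      have hxp' : x ∈ p.reverse.support := by simpa using hxp
      refine ⟨(ih (p.takeUntil x hxp) (hp.takeUntil hxp) hxu.symm (by omega) hx.ge
        fun y hy => ?_).symm, (ih (p.reverse.takeUntil x hxp') (hp.reverse.takeUntil hxp')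
        hxw.symm (by omega) hx.ge fun y hy => ?_).symm⟩
      · have := hlow y (p.support_takeUntil_subset_support hxp hy)
        have : y ≠ w := fun h =>
          Walk.endpoint_notMem_support_takeUntil hp hxp hxw.symm (h ▸ hy)
        tauto
      · have := hlow y (by simpa using p.reverse.support_takeUntil_subset_support hxp' hy)
        have : y ≠ u := fun h =>
          Walk.endpoint_notMem_support_takeUntil hp.reverse hxp' hxu.symm (h ▸ hy)
        tauto
    · refine Or.inl (ih p hp huw (by omega) (by omega) fun y hy => ?_)
      have := hlow y hy
      have : y ≠ x := ne_of_mem_of_not_mem hy hxp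
      tauto

theorem chGraph_adj_of_walk {u w : V} (p : G.Walk u w) (huw : u ≠ w)
    (hp : ∀ y ∈ p.support, y = u ∨ y = w ∨ rk π y < min (rk π u) (rk π w)) :
    (chGraph G π).Adj u w := by
  classical
  exact chAfter_le_chGraph G π _ <| chAfter_adj_of_isPath G π _ p.bypass p.bypass_isPath huw
    (min_le_left _ _) (min_le_right _ _) fun y hy => hp y (p.support_bypass_subset_support hy)

end ContractionHierarchy

def ReachableIn (G : SimpleGraph V) (s : Set V) (u v : V) : Prop :=
  ∃ p : G.Walk u v, ∀ x ∈ p.support, x ∈ s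

namespace ReachableIn

variable {G : SimpleGraph V} {s t : Set V} {u v w : V}

lemma refl (hu : u ∈ s) : ReachableIn G s u u := ⟨.nil, by simpa⟩

lemma left_mem (h : ReachableIn G s u v) : u ∈ s :=
  h.elim fun p hp => hp u p.start_mem_support

lemma right_mem (h : ReachableIn G s u v) : v ∈ s :=
  h.elim fun p hp => hp v p.end_mem_support

lemma symm (h : ReachableIn G s u v) : ReachableIn G s v u :=
  h.elim fun p hp => ⟨p.reverse, by simpa using hp⟩

lemma trans (h₁ : ReachableIn G s u v) (h₂ : ReachableIn G s v w) : ReachableIn G s u w := by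
  obtain ⟨p, hp⟩ := h₁
  obtain ⟨q, hq⟩ := h₂
  refine ⟨p.append q, fun x hx => ?_⟩
  rcases (Walk.mem_support_append_iff _ _).1 hx with hx | hx
  exacts [hp x hx, hq x hx]

lemma concat (h : ReachableIn G s u v) (hadj : G.Adj v w) (hw : w ∈ s) :
    ReachableIn G s u w := by
  obtain ⟨p, hp⟩ := h
  refine ⟨p.concat hadj, fun x hx => ?_⟩
  rw [Walk.support_concat, List.mem_append, List.mem_singleton] at hx
  rcases hx with hx | rfl
  exacts [hp x hx, hw]

lemma mono (hst : s ⊆ t) (h : ReachableIn G s u v) : ReachableIn G t u v :=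
  h.elim fun p hp => ⟨p, fun x hx => hst (hp x hx)⟩

end ReachableIn

section Components

variable [Fintype V] (G : SimpleGraph V)

open Classical in
noncomputable def componentIn (s : Set V) (u : V) : Finset V :=
  {x | ReachableIn G s u x}

open Classical in
noncomputable def outerBoundary (C : Finset V) : Finset V :=
  {h | h ∉ C ∧ ∃ x ∈ C, G.Adj x h}

variable {G} {s t : Set V} {u v x y : V}

@[simp]
lemma mem_componentIn : x ∈ componentIn G s u ↔ ReachableIn G s u x := by
  simp [componentIn]

@[simp]
lemma mem_outerBoundary {C : Finset V} :
    x ∈ outerBoundary G C ↔ x ∉ C ∧ ∃ y ∈ C, G.Adj y x := by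
  simp [outerBoundary]

lemma mem_of_mem_componentIn (hx : x ∈ componentIn G s u) : x ∈ s :=
  (mem_componentIn.1 hx).right_mem

lemma mem_componentIn_of_adj (hx : x ∈ componentIn G s u) (hadj : G.Adj x y) (hy : y ∈ s) :
    y ∈ componentIn G s u :=
  mem_componentIn.2 ((mem_componentIn.1 hx).concat hadj hy)

lemma componentIn_mono (hst : s ⊆ t) : componentIn G s u ⊆ componentIn G t u :=
  fun _ hx => mem_componentIn.2 ((mem_componentIn.1 hx).mono hst)

lemma not_mem_of_mem_outerBoundary_componentIn (hx : x ∈ outerBoundary G (componentIn G s u)) :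
    x ∉ s := fun hxs => by
  obtain ⟨hxC, y, hyC, hadj⟩ := mem_outerBoundary.1 hx
  exact hxC (mem_componentIn_of_adj hyC hadj hxs)

/-- A walk inside `s` starting at `u` stays inside the component of `u`. -/
lemma reachableIn_componentIn (hx : x ∈ componentIn G s u) (hy : y ∈ componentIn G s u) :
    ReachableIn G (componentIn G s u) x y := by
  classical
  have key : ∀ {z}, z ∈ componentIn G s u → ReachableIn G (componentIn G s u) u z := by
    intro z hz
    obtain ⟨p, hp⟩ := mem_componentIn.1 hz
    exact ⟨p, fun w hw => mem_componentIn.2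
      ⟨p.takeUntil w hw, fun z hz => hp z (p.support_takeUntil_subset_support hw hz)⟩⟩
  exact (key hx).symm.trans (key hy)

end Components

section SearchSpace

variable {n : ℕ} (G : SimpleGraph V) (π : Fin n ≃ V)

/-- `y` is where the walk first leaves the part of `K` of rank `≤ rk w`. -/
lemma exists_chGraph_adj_rk_lt {K : Set V} {w v : V} (h : ReachableIn G K w v)
    (hwv : rk π w < rk π v) :
    ∃ y, rk π w < rk π y ∧ (chGraph G π).Adj w y ∧ ReachableIn G K y v := by
  classical
  obtain ⟨p, hp⟩ := h
  set L := K ∩ {y | rk π y ≤ rk π w}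
  obtain ⟨d, hd, hx, hy⟩ := p.exists_boundary_dart {x | ReachableIn G L w x}
    (ReachableIn.refl ⟨hp w p.start_mem_support, show rk π w ≤ rk π w from le_rfl⟩)
    (fun hv => by have : rk π v ≤ rk π w := hv.right_mem.2; omega)
  have hyp : d.snd ∈ p.support := p.dart_snd_mem_support_of_mem_darts hd
  have hyK : d.snd ∈ K := hp _ hyp
  have hrk : rk π w < rk π d.snd := by
    by_contra hle
    exact hy (ReachableIn.concat hx d.adj ⟨hyK, not_lt.1 hle⟩)
  obtain ⟨q, hq⟩ := hx
  refine ⟨d.snd, hrk,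
    chGraph_adj_of_walk G π (q.concat d.adj) (ne_of_apply_ne (rk π) hrk.ne) ?_,
    ⟨p.dropUntil d.snd hyp, fun z hz => hp z (p.support_dropUntil_subset_support hyp hz)⟩⟩
  intro y hy
  rw [Walk.support_concat, List.mem_append, List.mem_singleton] at hy
  rcases hy with hy | rfl
  · have hyw : rk π y ≤ rk π w := (hq y hy).2
    rcases eq_or_ne y w with rfl | hne
    · exact Or.inl rfl
    · have : rk π y ≠ rk π w := fun h => hne (rk_injective π h)
      exact Or.inr (Or.inr (lt_min (by omega) (by omega)))
  · exact Or.inr (Or.inl rfl)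

theorem upReach_of_reachableIn {K : Set V} {v : V} (hmax : ∀ y ∈ K, rk π y ≤ rk π v)
    {w : V} (h : ReachableIn G K w v) : UpReach G π w v := by
  rcases eq_or_ne w v with rfl | hwv
  · exact .refl
  have hlt : rk π w < rk π v :=
    lt_of_le_of_ne (hmax w h.left_mem) fun e => hwv (rk_injective π e)
  obtain ⟨y, hy, hadj, hyv⟩ := exists_chGraph_adj_rk_lt G π h hlt
  have := hmax y hyv.left_mem
  exact .head ⟨hadj, hy⟩ (upReach_of_reachableIn hmax hyv)
termination_by rk π v - rk π w

/-- The walks of `a` and `b` to `v` concatenate to a walk whose inner vertices lie below both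
ends. -/
theorem isClique_chGraph_of_walks (C T : Set V) (v : V)
    (hwalk : ∀ a ∈ T, ∃ p : G.Walk a v, ∀ y ∈ p.support, y = a ∨ y ∈ C)
    (hlow : ∀ a ∈ T, ∀ y ∈ C, y = a ∨ rk π y < rk π a) : (chGraph G π).IsClique T := by
  intro a ha b hb hab
  obtain ⟨p, hp⟩ := hwalk a ha
  obtain ⟨q, hq⟩ := hwalk b hb
  refine chGraph_adj_of_walk G π (p.append q.reverse) hab fun y hy => ?_
  rw [Walk.mem_support_append_iff, Walk.support_reverse, List.mem_reverse] at hy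
  have hy' : y = a ∨ y = b ∨ y ∈ C := by
    rcases hy with hy | hy
    · rcases hp y hy with h | h <;> tauto
    · rcases hq y hy with h | h <;> tauto
  rcases hy' with rfl | rfl | hyC
  · exact Or.inl rfl
  · exact Or.inr (Or.inl rfl)
  · rcases hlow a ha y hyC with rfl | h₁
    · exact Or.inl rfl
    rcases hlow b hb y hyC with rfl | h₂
    · exact Or.inr (Or.inl rfl)
    exact Or.inr (Or.inr (lt_min h₁ h₂))

variable [Fintype V] [DecidableEq V] {C : Finset V} {v : V}
  (hC : ∀ x ∈ C, ReachableIn G C x v) (hvmax : ∀ y ∈ C, rk π y ≤ rk π v)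
  (hbd : ∀ h ∈ outerBoundary G C, rk π v < rk π h)
include hC hvmax hbd

theorem isClique_insert_outerBoundary :
    (chGraph G π).IsClique (insert v (outerBoundary G C) : Finset V) := by
  refine isClique_chGraph_of_walks G π C _ v (fun a ha => ?_) (fun a ha y hy => ?_)
  · rcases Finset.mem_insert.1 ha with rfl | ha
    · exact ⟨.nil, by simp⟩
    obtain ⟨-, x, hx, hadj⟩ := mem_outerBoundary.1 ha
    obtain ⟨p, hp⟩ := hC x hx
    refine ⟨.cons hadj.symm p, fun y hy => ?_⟩
    rcases List.mem_cons.1 (Walk.support_cons _ _ ▸ hy) with rfl | hy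
    exacts [Or.inl rfl, Or.inr (hp y hy)]
  · rcases Finset.mem_insert.1 ha with rfl | ha
    · rcases eq_or_ne y a with rfl | hne
      · exact Or.inl rfl
      · exact Or.inr (lt_of_le_of_ne (hvmax y hy) fun e => hne (rk_injective π e))
    · exact Or.inr ((hvmax y hy).trans_lt (hbd a ha))

theorem upReach_of_mem_insert_outerBoundary {w a : V} (hw : w ∈ C)
    (ha : a ∈ insert v (outerBoundary G C)) : UpReach G π w a := by
  have hwv : UpReach G π w v := upReach_of_reachableIn G π hvmax (hC w hw)
  rcases Finset.mem_insert.1 ha with rfl | ha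
  · exact hwv
  · refine hwv.tail ⟨isClique_insert_outerBoundary G π hC hvmax hbd ?_ ?_ ?_, hbd a ha⟩
    · simp
    · simp [ha]
    · rintro rfl; exact lt_irrefl _ (hbd _ ha)

end SearchSpace

section Separator

open Finset

variable [Fintype V] [DecidableEq V] (G : SimpleGraph V)

/-- Take a largest closed `A` with `3|A| ≤ 2N`: if `W \ A` were too big, then `3|A| < N`, and
either `A ∪ K` or `K` would be a larger one. -/
theorem exists_closed_balanced_subset (W : Finset V) {N : ℕ} (hW : W.card ≤ N)
    (hK : ∀ u ∈ W, ∃ K ⊆ W, u ∈ K ∧ (∀ a ∈ K, ∀ b ∈ W, G.Adj a b → b ∈ K) ∧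
      3 * K.card ≤ 2 * N) :
    ∃ A ⊆ W, (∀ a ∈ A, ∀ b ∈ W, G.Adj a b → b ∈ A) ∧
      3 * A.card ≤ 2 * N ∧ 3 * (W \ A).card ≤ 2 * N := by
  classical
  let F := W.powerset.filter fun A =>
    (∀ a ∈ A, ∀ b ∈ W, G.Adj a b → b ∈ A) ∧ 3 * A.card ≤ 2 * N
  obtain ⟨A, hAF, hAmax⟩ := F.exists_max_image card ⟨∅, by simp [F]⟩
  simp only [F, mem_filter, mem_powerset] at hAF hAmax
  obtain ⟨hAW, hAcl, hA⟩ := hAF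
  refine ⟨A, hAW, hAcl, hA, ?_⟩
  by_contra! hlarge
  have hsplit := card_sdiff_add_card_eq_card hAW
  obtain ⟨u, hu⟩ : (W \ A).Nonempty := card_pos.1 (by omega)
  obtain ⟨huW, huA⟩ := mem_sdiff.1 hu
  obtain ⟨K, hKW, huK, hKcl, hK⟩ := hK u huW
  by_cases hsum : 3 * (A.card + K.card) ≤ 2 * N
  · have hAK : A.card < (A ∪ K).card :=
      card_lt_card ⟨subset_union_left, fun h => huA (h (mem_union_right _ huK))⟩
    have := hAmax (A ∪ K) ⟨union_subset hAW hKW, ?_, by have := card_union_le A K; omega⟩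
    · omega
    · intro a ha b hb hab
      rcases mem_union.1 ha with ha | ha
      exacts [mem_union_left _ (hAcl a ha b hb hab), mem_union_right _ (hKcl a ha b hb hab)]
  · have := hAmax K ⟨hKW, hKcl, hK⟩
    omega

theorem isBalancedSepOn_univ_of_closed (S : Finset V)
    (hK : ∀ u ∉ S, ∃ K : Finset V, u ∈ K ∧ Disjoint K S ∧
      (∀ a ∈ K, ∀ b ∉ S, G.Adj a b → b ∈ K) ∧ 3 * K.card ≤ 2 * Fintype.card V) :
    IsBalancedSepOn G univ S := by
  obtain ⟨A, hAW, hAcl, hA, hB⟩ :=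
    exists_closed_balanced_subset G (univ \ S) (card_le_univ _) fun u hu => by
      obtain ⟨K, huK, hKS, hKcl, hK⟩ := hK u (mem_sdiff.1 hu).2
      refine ⟨K, fun x hx => mem_sdiff.2 ⟨mem_univ x, disjoint_left.1 hKS hx⟩, huK,
        fun a ha b hb => hKcl a ha b (mem_sdiff.1 hb).2, hK⟩
  have hAS : Disjoint A S := disjoint_left.2 fun a ha => (mem_sdiff.1 (hAW ha)).2
  refine ⟨subset_univ _, A, (univ \ S) \ A, subset_univ _, subset_univ _, disjoint_sdiff, hAS,
    disjoint_left.2 fun b hb => (mem_sdiff.1 (mem_sdiff.1 hb).1).2, ?_,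
    fun a ha b hb hab => (mem_sdiff.1 hb).2 (hAcl a ha b (mem_sdiff.1 hb).1 hab), ?_, ?_⟩
  · ext x; by_cases hxS : x ∈ S <;> by_cases hxA : x ∈ A <;> simp [hxS, hxA]
  · rwa [card_univ]
  · rwa [card_univ]

/-- `{v} ∪ N(C)` separates `C - v` from the rest, which has fewer than `n/3` vertices. -/
theorem isBalancedSepOn_insert_outerBoundary {C : Finset V} {v : V}
    (hbig : 2 * Fintype.card V < 3 * C.card)
    (hsmall : ∀ u, 3 * (componentIn G (C.erase v) u).card ≤ 2 * Fintype.card V) :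
    IsBalancedSepOn G univ (insert v (outerBoundary G C)) := by
  set S := insert v (outerBoundary G C)
  have hCS : ∀ {a b}, a ∈ C → b ∉ S → G.Adj a b → b ∈ C.erase v := fun {a b} ha hb hab => by
    simp only [S, mem_insert, mem_outerBoundary, not_or, not_and, not_exists] at hb
    exact mem_erase.2 ⟨hb.1, by by_contra h; exact hb.2 h a ha hab⟩
  refine isBalancedSepOn_univ_of_closed G S fun u hu => ?_
  by_cases huC : u ∈ C
  · have hu' : u ∈ C.erase v := mem_erase.2 ⟨fun h => hu (h ▸ mem_insert_self _ _), huC⟩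
    have hKC : ∀ {x}, x ∈ componentIn G (C.erase v) u → x ∈ C.erase v :=
      mem_of_mem_componentIn
    refine ⟨componentIn G (C.erase v) u, mem_componentIn.2 (.refl hu'), ?_,
      fun a ha b hb hab =>
        mem_componentIn_of_adj ha hab (hCS (mem_of_mem_erase (hKC ha)) hb hab),
      hsmall u⟩
    refine disjoint_left.2 fun x hx hxS => ?_
    obtain ⟨hxv, hxC⟩ := mem_erase.1 (hKC hx)
    rcases mem_insert.1 hxS with rfl | hxS
    exacts [hxv rfl, (mem_outerBoundary.1 hxS).1 hxC]
  · refine ⟨(S ∪ C)ᶜ, by simp [hu, huC], disjoint_left.2 fun x hx hxS => by simp_all,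
      fun a ha b hb hab => ?_, ?_⟩
    · simp only [mem_compl, mem_union, not_or] at ha ⊢
      exact ⟨hb, fun hbC => ha.1 (mem_insert_of_mem (mem_outerBoundary.2
        ⟨ha.2, b, hbC, hab.symm⟩))⟩
    · have : (S ∪ C)ᶜ.card ≤ Fintype.card V - C.card := by
        rw [card_compl]; have := card_le_card (subset_union_right (s₁ := S) (s₂ := C)); omega
      omega

end Separator

section Counting

variable [Fintype V] {n : ℕ} (G : SimpleGraph V) (π : Fin n ≃ V) {w : V} {Q : Finset V}

lemma card_le_nVertsSS (hQ : ∀ a ∈ Q, UpReach G π w a) : Q.card ≤ nVertsSS G π w := by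
  rw [← Set.ncard_coe_finset]
  exact Set.ncard_le_ncard (fun a ha => hQ a ha) (Set.toFinite _)

/-- Each pair of a clique of `G*π` inside `SS w`, ordered by rank, is an arc of `SS w`. -/
lemma choose_two_le_nArcsSS (hQ : (chGraph G π).IsClique (Q : Set V))
    (hreach : ∀ a ∈ Q, UpReach G π w a) : Q.card.choose 2 ≤ nArcsSS G π w := by
  let : LinearOrder V := LinearOrder.lift' (rk π) (rk_injective π)
  rw [← Finset.card_product_filter_lt, ← Set.ncard_coe_finset]
  refine Set.ncard_le_ncard (fun q hq => ?_) (Set.toFinite _)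
  simp only [Finset.coe_filter, Finset.mem_product, Set.mem_ofPred_eq] at hq
  obtain ⟨⟨ha, hb⟩, hlt⟩ := hq
  exact ⟨hQ ha hb (ne_of_lt hlt), hlt, hreach _ ha, hreach _ hb⟩

end Counting

lemma two_mul_choose_two (s : ℕ) : 2 * s.choose 2 = s * (s - 1) := by
  rw [Nat.choose_two_right, Nat.mul_div_cancel' (Nat.even_mul_pred_self s).two_dvd]

lemma mul_le_mul_sum_of_le_on [Fintype V] {C : Finset V} {f : V → ℕ} {N k m : ℕ}
    (hN : N ≤ k * C.card) (hf : ∀ w ∈ C, m ≤ f w) : N * m ≤ k * ∑ v, f v :=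
  calc N * m ≤ k * (C.card * m) := by rw [← mul_assoc]; exact Nat.mul_le_mul_right _ hN
    _ ≤ k * ∑ w ∈ C, f w := Nat.mul_le_mul_left _ (by simpa using C.card_nsmul_le_sum f m hf)
    _ ≤ k * ∑ v, f v := Nat.mul_le_mul_left _ (Finset.sum_le_sum_of_subset C.subset_univ)

open Finset in
theorem exists_balancedSep_clique_subset_searchSpaces [Fintype V] [DecidableEq V] {n : ℕ}
    (G : SimpleGraph V) (hG : G.Connected) (π : Fin n ≃ V) :
    ∃ S C : Finset V, IsBalancedSepOn G univ S ∧ (chGraph G π).IsClique (S : Set V) ∧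
      2 * Fintype.card V < 3 * C.card ∧ ∀ w ∈ C, ∀ a ∈ S, UpReach G π w a := by
  classical
  have hex : ∃ k u, 2 * Fintype.card V < 3 * (componentIn G {x | rk π x < k} u).card := by
    obtain ⟨u⟩ := hG.nonempty
    have huniv : componentIn G {x | rk π x < n} u = univ := eq_univ_of_forall fun x =>
      mem_componentIn.2 <| (hG.preconnected u x).elim fun p => ⟨p, fun y _ => rk_lt π y⟩
    exact ⟨n, u, by rw [huniv, card_univ]; have := Fintype.card_pos_iff.2 ⟨u⟩; omega⟩
  obtain ⟨u₀, hbig⟩ := Nat.find_spec hex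
  set k := Nat.find hex
  set C := componentIn G {x | rk π x < k} u₀
  obtain ⟨v, hvC, hvmax⟩ := C.exists_max_image (rk π) (card_pos.1 (by omega))
  have hvk : rk π v < k := mem_of_mem_componentIn (s := {x | rk π x < k}) hvC
  have hsmall : ∀ u, 3 * (componentIn G (C.erase v) u).card ≤ 2 * Fintype.card V := by
    intro u
    have hsub : (C.erase v : Set V) ⊆ {x | rk π x < rk π v} := fun x hx =>
      lt_of_le_of_ne (hvmax x (mem_of_mem_erase hx))
        fun e => (ne_of_mem_erase hx) (rk_injective π e)
    have := card_le_card (componentIn_mono (G := G) (u := u) hsub)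
    exact (Nat.mul_le_mul_left 3 this).trans (not_lt.1 (not_exists.1 (Nat.find_min hex hvk) u))
  have hC : ∀ x ∈ C, ReachableIn G C x v := fun x hx => reachableIn_componentIn hx hvC
  have hbd : ∀ h ∈ outerBoundary G C, rk π v < rk π h := fun h hh =>
    hvk.trans_le (not_lt.1 (not_mem_of_mem_outerBoundary_componentIn (s := {x | rk π x < k}) hh))
  exact ⟨_, C, isBalancedSepOn_insert_outerBoundary G hbig hsmall,
    isClique_insert_outerBoundary G π hC hvmax hbd, hbig,
    fun w hw a ha => upReach_of_mem_insert_outerBoundary G π hC hvmax hbd hw ha⟩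

theorem stmt5_general {V : Type*} [Fintype V] [DecidableEq V] {n : ℕ}
    (G : SimpleGraph V) (hG : G.Connected) (π : Fin n ≃ V)
    (S : Finset V)
    (hmin : ∀ S' : Finset V, IsBalancedSepOn G Finset.univ S' → S.card ≤ S'.card) :
    (∃ v : V, S.card ≤ nVertsSS G π v ∧ S.card * (S.card - 1) ≤ 2 * nArcsSS G π v) ∧
    n * S.card ≤ 3 * ∑ v : V, nVertsSS G π v ∧
    n * (S.card * (S.card - 1)) ≤ 6 * ∑ v : V, nArcsSS G π v := by
  obtain ⟨S', C, hsep, hclique, hC, hreach⟩ := exists_balancedSep_clique_subset_searchSpaces G hG π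
  have hs := hmin S' hsep
  have hn : Fintype.card V = n := by simpa using (Fintype.card_congr π).symm
  have hverts : ∀ w ∈ C, S.card ≤ nVertsSS G π w := fun w hw =>
    hs.trans (card_le_nVertsSS G π (hreach w hw))
  have harcs : ∀ w ∈ C, S.card.choose 2 ≤ nArcsSS G π w := fun w hw =>
    (Nat.choose_le_choose 2 hs).trans (choose_two_le_nArcsSS G π hclique (hreach w hw))
  obtain ⟨w, hw⟩ : C.Nonempty := Finset.card_pos.1 (by omega)
  have hCn : n ≤ 3 * C.card := by omega
  rw [← two_mul_choose_two]
  refine ⟨⟨w, hverts w hw, Nat.mul_le_mul_left 2 (harcs w hw)⟩,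
    mul_le_mul_sum_of_le_on hCn hverts, ?_⟩
  have := mul_le_mul_sum_of_le_on hCn harcs
  calc n * (2 * S.card.choose 2) = 2 * (n * S.card.choose 2) := by ring
    _ ≤ 6 * ∑ v, nArcsSS G π v := by omega

/-- Let `s` be the cardinality of a minimum balanced separator of the
connected graph `G`. Then for every contraction order `π`:
(i) some vertex `v` has at least `s` vertices and at least `s * (s - 1) / 2` arcs in
its search space `SS v`, and
(ii) the average over all `n` vertices of the number of vertices of `SS v` is at
least `s / 3`, and the average number of arcs of `SS v` is at least `s * (s - 1) / 6`
(both stated multiplied out to avoid division). -/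
theorem stmt5 {V : Type*} [Fintype V] [DecidableEq V] {n : ℕ}
    (G : SimpleGraph V) (hG : G.Connected) (π : Fin n ≃ V)
    (S : Finset V) (hS : IsBalancedSepOn G Finset.univ S)
    (hmin : ∀ S' : Finset V, IsBalancedSepOn G Finset.univ S' → S.card ≤ S'.card) :
    (∃ v : V, S.card ≤ nVertsSS G π v ∧ S.card * (S.card - 1) ≤ 2 * nArcsSS G π v) ∧
    n * S.card ≤ 3 * ∑ v : V, nVertsSS G π v ∧
    n * (S.card * (S.card - 1)) ≤ 6 * ∑ v : V, nArcsSS G π v :=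
  stmt5_general G hG π S hmin
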